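/- (Theorem 2: identification of LATT) Under exclusion, conditional independence [Y(0),Y(1),W(0),W(1)] ⟂ Z | X, monotonicity, existence of compliers, and the one-sided overlap condition P(Z=1|X=x) < 1 for almost all x together with P(Z=1) > 0, the local average treatment effect on the treated satisfies τ_LATT = E[Y(1)−Y(0) | W(1)>W(0), W=1] = (E[Y|Z=1] − E[μ₀(X)|Z=1]) / (E[W|Z=1] − E[ρ₀(X)|Z=1]). -/

import Mathlib

open MeasureTheory ProbabilityTheory

/-!
Conditional independence of `q = (Y(0), Y(1), W(0), W(1))` and `Z` given `X` is independence
under the regular conditional distribution given `X`, so `E[φ(q) · 1{Z = z} | X]` factors as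
`E[φ(q) | X] · P(Z = z | X)`. Hence the regression `μ₀(X)` fitted on the controls is
`E[W(0)Y(1) + (1 - W(0))Y(0) | X]`: on `Z = 0` the observed outcome is that function of `q`,
and the overlap condition `P(Z = 0 | X) > 0` transfers the identity from `P(· | Z = 0)` to `P`.
Integrating over the treated, the numerator becomes `E[(W(1) - W(0))(Y(1) - Y(0)); Z = 1]`
and the denominator `E[W(1) - W(0); Z = 1]`, both divided by `P(Z = 1)`. By monotonicity
`W(1) - W(0)` is the indicator of the compliers, and a complier is treated exactly when
`Z = 1`.
-/

namespace ProbabilityTheory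

variable {Ω : Type*} {m mΩ : MeasurableSpace Ω} {μ : Measure Ω} {s : Set Ω} {f : Ω → ℝ}

theorem integral_cond (f : Ω → ℝ) : ∫ ω, f ω ∂μ[|s] = (μ.real s)⁻¹ * ∫ ω in s, f ω ∂μ := by
  rw [cond, integral_smul_measure, ENNReal.toReal_inv, smul_eq_mul, measureReal_def]

theorem setIntegral_cond {A : Set Ω} (hA : MeasurableSet A) (f : Ω → ℝ) :
    ∫ ω in A, f ω ∂μ[|s] = (μ.real s)⁻¹ * ∫ ω in A ∩ s, f ω ∂μ := by
  rw [cond, Measure.restrict_smul, integral_smul_measure, ENNReal.toReal_inv, smul_eq_mul,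
    measureReal_def, Measure.restrict_restrict hA]

theorem _root_.MeasureTheory.Integrable.cond (hf : Integrable f μ) : Integrable f μ[|s] := by
  by_cases hs : μ s = 0
  · rw [cond_eq_zero_of_meas_eq_zero hs]
    exact integrable_zero_measure
  · exact hf.restrict.smul_measure (ENNReal.inv_ne_top.mpr hs)

variable [IsFiniteMeasure μ]

theorem measure_eq_zero_of_measure_inter_eq_zero (hm : m ≤ mΩ) (hs : MeasurableSet s)
    (hpos : ∀ᵐ ω ∂μ, 0 < (μ⟦s | m⟧) ω) {D : Set Ω} (hD : MeasurableSet[m] D)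
    (hDs : μ (D ∩ s) = 0) : μ D = 0 := by
  have h_int : ∫ ω in D, (μ⟦s | m⟧) ω ∂μ = 0 := by
    rw [setIntegral_condExp hm ((integrable_const 1).indicator hs) hD, setIntegral_indicator hs,
      setIntegral_const, measureReal_def, hDs]
    simp
  have h_nonneg : 0 ≤ᵐ[μ] μ⟦s | m⟧ :=
    condExp_nonneg (.of_forall fun ω => Set.indicator_nonneg (by simp) ω)
  have h_zero := (setIntegral_eq_zero_iff_of_nonneg_ae (ae_restrict_of_ae h_nonneg)
    integrable_condExp.integrableOn).mp h_int
  have h_false : ∀ᵐ _ ∂μ.restrict D, False := by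
    filter_upwards [h_zero, ae_restrict_of_ae hpos] with ω h0 hp
    exact (h0 ▸ hp).false
  exact Measure.restrict_eq_zero.mp (ae_eq_bot.mp (Filter.eventually_false_iff_eq_bot.mp h_false))

theorem ae_eq_of_ae_eq_cond (hm : m ≤ mΩ) (hs : MeasurableSet s)
    (hpos : ∀ᵐ ω ∂μ, 0 < (μ⟦s | m⟧) ω) {g h : Ω → ℝ} (hg : StronglyMeasurable[m] g)
    (hh : StronglyMeasurable[m] h) (hgh : g =ᵐ[μ[|s]] h) : g =ᵐ[μ] h := by
  have hD : MeasurableSet[m] {ω | g ω ≠ h ω} :=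
    (measurableSet_eq_fun hg.measurable hh.measurable).compl
  have hDs : μ ({ω | g ω ≠ h ω} ∩ s) = 0 := by
    have h_cond : μ[|s] {ω | g ω ≠ h ω} = 0 := hgh
    rw [cond_apply hs, mul_eq_zero, ENNReal.inv_eq_zero, Set.inter_comm] at h_cond
    exact h_cond.resolve_left (measure_ne_top μ s)
  exact measure_eq_zero_of_measure_inter_eq_zero hm hs hpos hD hDs

section StandardBorel

variable [StandardBorelSpace Ω] {hm : m ≤ mΩ}

theorem CondIndepFun.condExp_mul {g : Ω → ℝ} (hfg : CondIndepFun m hm f g μ)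
    (hf : Measurable f) (hg : Measurable g) (hf_int : Integrable f μ) (hg_int : Integrable g μ)
    (hfg_int : Integrable (f * g) μ) :
    μ[f * g | m] =ᵐ[μ] μ[f | m] * μ[g | m] := by
  -- `f` and `g` are independent under the conditional distribution `condExpKernel μ m ω`
  -- for a.e. `ω`, and each conditional expectation is an integral against that distribution.
  have hind : ∀ᵐ ω ∂μ, IndepFun f g (condExpKernel μ m ω) := by
    refine ae_of_ae_trim hm (((condIndepFun_iff_map_prod_eq_prod_map_map hf hg).mp hfg).mono
      fun ω hω => ?_)
    rw [indepFun_iff_map_prod_eq_prod_map_map hf.aemeasurable hg.aemeasurable]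
    simpa [Kernel.map_apply _ (hf.prodMk hg), Kernel.prod_apply, Kernel.map_apply _ hf,
      Kernel.map_apply _ hg] using hω
  filter_upwards [condExp_ae_eq_integral_condExpKernel hm hfg_int,
    condExp_ae_eq_integral_condExpKernel hm hf_int,
    condExp_ae_eq_integral_condExpKernel hm hg_int, hind] with ω hfgω hfω hgω hindω
  rw [Pi.mul_apply, hfgω, hfω, hgω]
  exact hindω.integral_mul_eq_mul_integral hf.aestronglyMeasurable hg.aestronglyMeasurable

theorem CondIndepFun.indicator_preimage_right {β γ : Type*} [MeasurableSpace β]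
    [MeasurableSpace γ] {f : Ω → β} {g : Ω → γ} {t : Set γ} (hfg : CondIndepFun m hm f g μ)
    (ht : MeasurableSet t) : CondIndepFun m hm f ((g ⁻¹' t).indicator fun _ => (1 : ℝ)) μ :=
  hfg.comp measurable_id (measurable_const.indicator ht)

theorem setIntegral_inter_condExp (hs : MeasurableSet s) (hf : Measurable f)
    (hf_int : Integrable f μ) (hfs : CondIndepFun m hm f (s.indicator fun _ => (1 : ℝ)) μ)
    {A : Set Ω} (hA : MeasurableSet[m] A) :
    ∫ ω in A ∩ s, (μ[f | m]) ω ∂μ = ∫ ω in A ∩ s, f ω ∂μ := by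
  set e : Ω → ℝ := s.indicator fun _ => 1
  have he_meas : Measurable e := measurable_const.indicator hs
  have he_int : Integrable e μ := (integrable_const 1).indicator hs
  have h_mul : ∀ h : Ω → ℝ, h * e = s.indicator h := fun h => by
    ext ω; by_cases hω : ω ∈ s <;> simp [e, hω]
  have h_int : ∀ {h : Ω → ℝ}, Integrable h μ → Integrable (h * e) μ := fun hh => by
    rw [h_mul]; exact hh.indicator hs
  rw [← setIntegral_indicator hs, ← setIntegral_indicator hs, ← h_mul (μ[f | m]), ← h_mul f,
    ← setIntegral_condExp hm (h_int integrable_condExp) hA,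
    ← setIntegral_condExp hm (h_int hf_int) hA]
  refine setIntegral_congr_ae (hm A hA) ?_
  filter_upwards [condExp_mul_of_stronglyMeasurable_left stronglyMeasurable_condExp
    (h_int integrable_condExp) he_int,
    hfs.condExp_mul hf he_meas hf_int he_int (h_int hf_int)] with ω h_pull h_prod _
  rw [h_pull, h_prod]

theorem condExp_cond_ae_eq_condExp (hs : MeasurableSet s) (hf : Measurable f)
    (hf_int : Integrable f μ) (hfs : CondIndepFun m hm f (s.indicator fun _ => (1 : ℝ)) μ) :
    μ[|s][f | m] =ᵐ[μ[|s]] μ[f | m] := by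
  refine (ae_eq_condExp_of_forall_setIntegral_eq hm hf_int.cond
    (fun A _ _ => integrable_condExp.cond.integrableOn) (fun A hA _ => ?_)
    stronglyMeasurable_condExp.aestronglyMeasurable).symm
  rw [setIntegral_cond (hm A hA), setIntegral_cond (hm A hA),
    setIntegral_inter_condExp hs hf hf_int hfs hA]

/-- `μ[|s₀][F | m]` is the regression of `F` on `m` fitted on `s₀` (the paper's `μ₀(X)`
for `s₀ = {Z = 0}`); averaged over `s₁` it imputes `f₀`. -/
theorem integral_cond_sub_integral_condExp_cond {s₀ s₁ : Set Ω} {F f₀ f₁ : Ω → ℝ}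
    (hs₀ : MeasurableSet s₀) (hs₁ : MeasurableSet s₁) (hpos : ∀ᵐ ω ∂μ, 0 < (μ⟦s₀ | m⟧) ω)
    (hf₀ : Measurable f₀) (hf₀_int : Integrable f₀ μ) (hf₁_int : Integrable f₁ μ)
    (h₀ : CondIndepFun m hm f₀ (s₀.indicator fun _ => (1 : ℝ)) μ)
    (h₁ : CondIndepFun m hm f₀ (s₁.indicator fun _ => (1 : ℝ)) μ)
    (hF₀ : Set.EqOn F f₀ s₀) (hF₁ : Set.EqOn F f₁ s₁) :
    ∫ ω, F ω ∂μ[|s₁] - ∫ ω, (μ[|s₀][F | m]) ω ∂μ[|s₁]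
      = (μ.real s₁)⁻¹ * ∫ ω in s₁, (f₁ ω - f₀ ω) ∂μ := by
  have h_imp : μ[|s₀][F | m] =ᵐ[μ] μ[f₀ | m] :=
    ae_eq_of_ae_eq_cond hm hs₀ hpos stronglyMeasurable_condExp stronglyMeasurable_condExp
      ((condExp_congr_ae (ae_cond_of_forall_mem hs₀ hF₀)).trans
        (condExp_cond_ae_eq_condExp hs₀ hf₀ hf₀_int h₀))
  have h_reg : ∫ ω in s₁, (μ[f₀ | m]) ω ∂μ = ∫ ω in s₁, f₀ ω ∂μ := by
    simpa using setIntegral_inter_condExp hs₁ hf₀ hf₀_int h₁ MeasurableSet.univ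
  rw [integral_congr_ae (cond_absolutelyContinuous.ae_le h_imp), integral_cond, integral_cond,
    ← mul_sub, setIntegral_congr_fun hs₁ hF₁, h_reg,
    integral_sub hf₁_int.integrableOn hf₀_int.integrableOn]

end StandardBorel

end ProbabilityTheory

def observed {Ω : Type*} (d a b : Ω → ℝ) : Ω → ℝ := fun ω => d ω * a ω + (1 - d ω) * b ω

theorem observed_apply_sub_observed_apply {Ω : Type*} (d e a b : Ω → ℝ) (ω : Ω) :
    observed d a b ω - observed e a b ω = (d ω - e ω) * (a ω - b ω) := by
  simp only [observed]; ring

theorem eq_zero_and_eq_one_of_lt {a b : ℝ} (ha : a = 0 ∨ a = 1) (hb : b = 0 ∨ b = 1)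
    (hab : a < b) : a = 0 ∧ b = 1 := by
  rcases ha with rfl | rfl <;> rcases hb with rfl | rfl <;> norm_num at *

section Binary

variable {Ω : Type*} {m mΩ : MeasurableSpace Ω} {μ : Measure Ω}

theorem integrable_of_forall_eq_zero_or_eq_one [IsFiniteMeasure μ] {d : Ω → ℝ}
    (hd : Measurable d) (hd01 : ∀ ω, d ω = 0 ∨ d ω = 1) : Integrable d μ :=
  .of_bound hd.aestronglyMeasurable 1 (.of_forall fun ω => by rcases hd01 ω with h | h <;> simp [h])

theorem integrable_observed {d a b : Ω → ℝ} (hd : Measurable d)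
    (hd01 : ∀ ω, d ω = 0 ∨ d ω = 1) (ha : Integrable a μ) (hb : Integrable b μ) :
    Integrable (observed d a b) μ := by
  have h : observed d a b = fun ω => d ω * (a - b) ω + b ω := by
    ext ω; simp only [observed, Pi.sub_apply]; ring
  rw [h]
  refine ((ha.sub hb).bdd_mul hd.aestronglyMeasurable (c := 1) (.of_forall fun ω => ?_)).add hb
  rcases hd01 ω with h | h <;> simp [h]

theorem ae_pos_condExp_indicator_setOf_eq_zero [IsFiniteMeasure μ] (hm : m ≤ mΩ) {d : Ω → ℝ}
    (hd : Measurable d) (hd01 : ∀ ω, d ω = 0 ∨ d ω = 1) (hd_lt : ∀ᵐ ω ∂μ, (μ[d | m]) ω < 1) :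
    ∀ᵐ ω ∂μ, 0 < (μ⟦{ω | d ω = 0} | m⟧) ω := by
  have h : ({ω | d ω = 0}.indicator fun _ => (1 : ℝ)) = (fun _ => 1) - d := by
    ext ω; rcases hd01 ω with h | h <;> simp [h]
  rw [h]
  filter_upwards [condExp_sub (integrable_const 1)
    (integrable_of_forall_eq_zero_or_eq_one hd hd01) m, hd_lt] with ω h_sub h_lt
  rw [h_sub, Pi.sub_apply, condExp_const hm]
  linarith

theorem setOf_lt_and_observed_eq_one {Z W₀ W₁ : Ω → ℝ} (hW₀ : ∀ ω, W₀ ω = 0 ∨ W₀ ω = 1)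
    (hW₁ : ∀ ω, W₁ ω = 0 ∨ W₁ ω = 1) :
    {ω | W₀ ω < W₁ ω ∧ observed Z W₁ W₀ ω = 1} = {ω | W₀ ω < W₁ ω} ∩ {ω | Z ω = 1} := by
  ext ω
  refine and_congr_right fun hlt => ?_
  obtain ⟨h₀, h₁⟩ := eq_zero_and_eq_one_of_lt (hW₀ ω) (hW₁ ω) hlt
  simp [observed, h₀, h₁]

variable {W₀ W₁ : Ω → ℝ} (hW₀ : ∀ ω, W₀ ω = 0 ∨ W₀ ω = 1)
  (hW₁ : ∀ ω, W₁ ω = 0 ∨ W₁ ω = 1) (hmono : ∀ᵐ ω ∂μ, W₀ ω ≤ W₁ ω)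
include hW₀ hW₁ hmono

theorem setIntegral_sub_mul_eq_setIntegral_inter (hW₀m : Measurable W₀) (hW₁m : Measurable W₁)
    (S : Set Ω) (h : Ω → ℝ) :
    ∫ ω in S, (W₁ ω - W₀ ω) * h ω ∂μ = ∫ ω in S ∩ {ω | W₀ ω < W₁ ω}, h ω ∂μ := by
  have h_ind : W₁ - W₀ =ᵐ[μ] {ω | W₀ ω < W₁ ω}.indicator fun _ => 1 := by
    filter_upwards [hmono] with ω hω
    rcases hW₀ ω with h₀ | h₀ <;> rcases hW₁ ω with h₁ | h₁ <;> simp [h₀, h₁] at hω ⊢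
    linarith
  rw [← setIntegral_indicator (measurableSet_lt hW₀m hW₁m)]
  refine integral_congr_ae (ae_restrict_of_ae (h_ind.mono fun ω hω => ?_))
  simp only [← Pi.sub_apply, hω]
  by_cases hlt : W₀ ω < W₁ ω <;> simp [hlt]

theorem setIntegral_sub_eq_measureReal_inter (hW₀m : Measurable W₀) (hW₁m : Measurable W₁)
    (S : Set Ω) : ∫ ω in S, (W₁ ω - W₀ ω) ∂μ = μ.real (S ∩ {ω | W₀ ω < W₁ ω}) := by
  simpa using setIntegral_sub_mul_eq_setIntegral_inter hW₀ hW₁ hmono hW₀m hW₁m S 1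

end Binary

theorem latt_identification_general
    {Ω 𝓧 : Type*} [MeasurableSpace Ω] [StandardBorelSpace Ω] [MeasurableSpace 𝓧]
    (μ : Measure Ω) [IsProbabilityMeasure μ]
    (Y0 Y1 W0 W1 Z : Ω → ℝ) (X : Ω → 𝓧)
    (hY0m : Measurable Y0) (hY1m : Measurable Y1)
    (hW0m : Measurable W0) (hW1m : Measurable W1)
    (hZm : Measurable Z) (hX : Measurable X)
    (hY0 : Integrable Y0 μ) (hY1 : Integrable Y1 μ)
    (hW0b : ∀ ω, W0 ω = 0 ∨ W0 ω = 1) (hW1b : ∀ ω, W1 ω = 0 ∨ W1 ω = 1)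
    (hZb : ∀ ω, Z ω = 0 ∨ Z ω = 1)
    (W Y : Ω → ℝ)
    (hWdef : W = fun ω => Z ω * W1 ω + (1 - Z ω) * W0 ω)
    (hYdef : Y = fun ω => W ω * Y1 ω + (1 - W ω) * Y0 ω)
    (hindep : CondIndepFun (MeasurableSpace.comap X inferInstance) hX.comap_le
      (fun ω => (Y0 ω, Y1 ω, W0 ω, W1 ω)) Z μ)
    (hmono : ∀ᵐ ω ∂μ, W0 ω ≤ W1 ω)
    (hoverlap : ∀ᵐ ω ∂μ, (μ[Z | MeasurableSpace.comap X inferInstance]) ω < 1)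
    (hZ1 : 0 < μ {ω | Z ω = 1}) :
    ∫ ω, (Y1 ω - Y0 ω) ∂μ[|{ω | W0 ω < W1 ω ∧ W ω = 1}]
      = ((∫ ω, Y ω ∂μ[|{ω' | Z ω' = 1}]) -
          ∫ ω, ((μ[|{ω' | Z ω' = 0}])[Y | MeasurableSpace.comap X inferInstance]) ω
            ∂μ[|{ω' | Z ω' = 1}])
        / ((∫ ω, W ω ∂μ[|{ω' | Z ω' = 1}]) -
            ∫ ω, ((μ[|{ω' | Z ω' = 0}])[W | MeasurableSpace.comap X inferInstance]) ω
              ∂μ[|{ω' | Z ω' = 1}]) := by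
  obtain rfl : W = observed Z W1 W0 := hWdef
  obtain rfl : Y = observed (observed Z W1 W0) Y1 Y0 := hYdef
  have hS₀ : MeasurableSet {ω | Z ω = 0} := hZm (measurableSet_singleton 0)
  have hS₁ : MeasurableSet {ω | Z ω = 1} := hZm (measurableSet_singleton 1)
  have h_pot : ∀ φ : ℝ × ℝ × ℝ × ℝ → ℝ, Measurable φ → ∀ z : ℝ,
      CondIndepFun (MeasurableSpace.comap X inferInstance) hX.comap_le
        (fun ω => φ (Y0 ω, Y1 ω, W0 ω, W1 ω)) ({ω | Z ω = z}.indicator fun _ => (1 : ℝ)) μ :=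
    fun φ hφ z =>
      (hindep.comp hφ measurable_id).indicator_preimage_right (measurableSet_singleton z)
  have hpos := ae_pos_condExp_indicator_setOf_eq_zero hX.comap_le hZm hZb hoverlap
  have hnum := integral_cond_sub_integral_condExp_cond (F := observed (observed Z W1 W0) Y1 Y0)
    (f₀ := observed W0 Y1 Y0) (f₁ := observed W1 Y1 Y0) hS₀ hS₁ hpos (by unfold observed; fun_prop)
    (integrable_observed hW0m hW0b hY1 hY0) (integrable_observed hW1m hW1b hY1 hY0)
    (h_pot (fun p => p.2.2.1 * p.2.1 + (1 - p.2.2.1) * p.1) (by fun_prop) 0)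
    (h_pot (fun p => p.2.2.1 * p.2.1 + (1 - p.2.2.1) * p.1) (by fun_prop) 1)
    (fun ω hω => by simp [observed, hω.out]) (fun ω hω => by simp [observed, hω.out])
  have hden := integral_cond_sub_integral_condExp_cond (F := observed Z W1 W0) (f₀ := W0)
    (f₁ := W1) hS₀ hS₁ hpos hW0m
    (integrable_of_forall_eq_zero_or_eq_one hW0m hW0b)
    (integrable_of_forall_eq_zero_or_eq_one hW1m hW1b)
    (h_pot (fun p => p.2.2.1) (by fun_prop) 0) (h_pot (fun p => p.2.2.1) (by fun_prop) 1)
    (fun ω hω => by simp [observed, hω.out]) (fun ω hω => by simp [observed, hω.out])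
  have hP₁ : μ.real {ω | Z ω = 1} ≠ 0 := ENNReal.toReal_ne_zero.mpr ⟨hZ1.ne', measure_ne_top μ _⟩
  simp_rw [observed_apply_sub_observed_apply] at hnum
  rw [hnum, hden, setOf_lt_and_observed_eq_one hW0b hW1b, integral_cond,
    setIntegral_sub_mul_eq_setIntegral_inter hW0b hW1b hmono hW0m hW1m,
    setIntegral_sub_eq_measureReal_inter hW0b hW1b hmono hW0m hW1m, Set.inter_comm,
    mul_div_mul_left _ _ (inv_ne_zero hP₁), div_eq_inv_mul]

/-- (Theorem 2: identification of LATT.) Under conditional independence given `X`,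
monotonicity, existence of compliers, one-sided overlap `P(Z=1|X) < 1` a.s. and
`P(Z=1) > 0`, the LATT satisfies
`τ_LATT = (E[Y|Z=1] - E[μ₀(X)|Z=1]) / (E[W|Z=1] - E[ρ₀(X)|Z=1])`. -/
theorem latt_identification
    {Ω 𝓧 : Type*} [MeasurableSpace Ω] [StandardBorelSpace Ω] [MeasurableSpace 𝓧]
    (μ : Measure Ω) [IsProbabilityMeasure μ]
    (Y0 Y1 W0 W1 Z : Ω → ℝ) (X : Ω → 𝓧)
    (hY0m : Measurable Y0) (hY1m : Measurable Y1)
    (hW0m : Measurable W0) (hW1m : Measurable W1)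
    (hZm : Measurable Z) (hX : Measurable X)
    (hY0 : Integrable Y0 μ) (hY1 : Integrable Y1 μ)
    (hW0b : ∀ ω, W0 ω = 0 ∨ W0 ω = 1) (hW1b : ∀ ω, W1 ω = 0 ∨ W1 ω = 1)
    (hZb : ∀ ω, Z ω = 0 ∨ Z ω = 1)
    (W Y : Ω → ℝ)
    (hWdef : W = fun ω => Z ω * W1 ω + (1 - Z ω) * W0 ω)
    (hYdef : Y = fun ω => W ω * Y1 ω + (1 - W ω) * Y0 ω)
    (hindep : CondIndepFun (MeasurableSpace.comap X inferInstance) hX.comap_le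
      (fun ω => (Y0 ω, Y1 ω, W0 ω, W1 ω)) Z μ)
    (hmono : ∀ᵐ ω ∂μ, W0 ω ≤ W1 ω)
    (hcomp : 0 < μ {ω | W0 ω < W1 ω})
    (hoverlap : ∀ᵐ ω ∂μ, (μ[Z | MeasurableSpace.comap X inferInstance]) ω < 1)
    (hZ1 : 0 < μ {ω | Z ω = 1}) :
    ∫ ω, (Y1 ω - Y0 ω) ∂μ[|{ω | W0 ω < W1 ω ∧ W ω = 1}]
      = ((∫ ω, Y ω ∂μ[|{ω' | Z ω' = 1}]) -
          ∫ ω, ((μ[|{ω' | Z ω' = 0}])[Y | MeasurableSpace.comap X inferInstance]) ω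
            ∂μ[|{ω' | Z ω' = 1}])
        / ((∫ ω, W ω ∂μ[|{ω' | Z ω' = 1}]) -
            ∫ ω, ((μ[|{ω' | Z ω' = 0}])[W | MeasurableSpace.comap X inferInstance]) ω
              ∂μ[|{ω' | Z ω' = 1}]) :=
  latt_identification_general μ Y0 Y1 W0 W1 Z X hY0m hY1m hW0m hW1m hZm hX hY0 hY1 hW0b hW1b hZb W Y
    hWdef hYdef hindep hmono hoverlap hZ1
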